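/- For the Rosen continued fraction convergents of x ∈ [-λ/2, λ/2), the denominators satisfy q_n > 0 for all n ≥ 0 (as long as the expansion is defined up to step n). -/

import Mathlib

/-!
Put `θ = π / k`, so that `λ = 2 cos θ` and the rescaled Chebyshev polynomials take the values
`S_j(λ) = sin ((j + 1) θ) / sin θ`, positive for `j ≤ k - 2` and zero for `j = k - 1`.
The denominators obey `q_{n+1} = a_{n+1} q_n + ε_{n+1} q_{n-1}` with `a_{n+1} ∈ {λ} ∪ [2λ, ∞)`.
If the expansion ends in a run of `j` digits `(-1 : λ)`, then `0 ≤ q_{n-1}`, `0 < q_n` and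
`S_{j+1}(λ) q_{n-1} ≤ S_j(λ) q_n`: one more such digit raises `j` by the recurrence of `S`,
and any other digit gives `q_{n+1} ≥ λ q_n`. This needs `j ≤ k - 3`, which holds because along
a run the orbit follows `t ↦ -1/t - λ` and cannot stay in `[-λ/2, 0)` for `k - 2` steps.
-/

open Real

/-- The Rosen continued fraction map `S(x) = |1/x| - [|1/x|]_λ` on `[-λ/2, λ/2)`,
where `[w]_λ = bλ` for the unique integer `b` with `w ∈ [bλ - λ/2, bλ + λ/2)`. -/
noncomputable def rosenMap (lam : ℝ) (x : ℝ) : ℝ :=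
  if x = 0 then 0 else |x⁻¹| - (⌊|x⁻¹| / lam + 1 / 2⌋ : ℤ) * lam

/-- The sign digit `ε_{n+1}(x) = sgn(S^n x)`. -/
noncomputable def rosenEps (lam x : ℝ) (n : ℕ) : ℝ :=
  Real.sign ((rosenMap lam)^[n] x)

/-- The digit `a_{n+1}(x) = [|1/S^n x|]_λ`. -/
noncomputable def rosenA (lam x : ℝ) (n : ℕ) : ℝ :=
  (⌊|((rosenMap lam)^[n] x)⁻¹| / lam + 1 / 2⌋ : ℤ) * lam

/-- The convergent matrix `[[p_{n-1}, p_n], [q_{n-1}, q_n]] = ∏_{i=1}^n [[0, ε_i], [1, a_i]]`. -/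
noncomputable def rosenMat (lam x : ℝ) (n : ℕ) : Matrix (Fin 2) (Fin 2) ℝ :=
  ((List.range n).map (fun i => !![0, rosenEps lam x i; 1, rosenA lam x i])).prod

/-- The numerator `p_n` of the `n`-th Rosen convergent. -/
noncomputable def rosenP (lam x : ℝ) (n : ℕ) : ℝ := rosenMat lam x n 0 1

/-- The denominator `q_n` of the `n`-th Rosen convergent. -/
noncomputable def rosenQ (lam x : ℝ) (n : ℕ) : ℝ := rosenMat lam x n 1 1

open Polynomial.Chebyshev

namespace Real

lemma neg_of_sign_eq_neg_one {t : ℝ} (h : Real.sign t = -1) : t < 0 := by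
  rcases lt_trichotomy t 0 with ht | rfl | ht
  · exact ht
  · norm_num [Real.sign_zero] at h
  · norm_num [Real.sign_of_pos ht] at h

lemma sin_pi_div_pos {k : ℕ} (hk : 1 < k) : 0 < sin (π / k) :=
  sin_pos_of_pos_of_lt_pi (div_pos pi_pos (by positivity))
    (div_lt_self pi_pos (by exact_mod_cast hk))

lemma two_mul_cos_pi_div_sq_notMem_Ioo {k : ℕ} (hk : 3 ≤ k) :
    (2 * cos (π / k)) ^ 2 ∉ Set.Ioo (4 / 3) 2 := by
  rintro ⟨hlo, hhi⟩
  rcases (show k = 3 ∨ 4 ≤ k by omega) with rfl | hk4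
  · norm_num [cos_pi_div_three] at hlo
  · have hk' : (4 : ℝ) ≤ k := by exact_mod_cast hk4
    have hcos : 0 ≤ cos (2 * (π / k)) := by
      refine cos_nonneg_of_mem_Icc
        ⟨by linarith [pi_pos, div_pos pi_pos (by positivity : (0 : ℝ) < k)], ?_⟩
      rw [mul_div_assoc', div_le_iff₀ (by positivity)]
      nlinarith [pi_pos]
    rw [cos_two_mul] at hcos
    nlinarith

end Real

namespace Polynomial.Chebyshev

lemma S_eval_add_two {R : Type*} [CommRing R] (x : R) (j : ℕ) :
    (S R (j + 2)).eval x = x * (S R (j + 1)).eval x - (S R j).eval x := by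
  simp [S_add_two]

variable {k : ℕ}

lemma S_eval_two_mul_cos_pi_div_pos {j : ℕ} (hj : j + 1 < k) :
    0 < (S ℝ j).eval (2 * cos (π / k)) := by
  have hk : (0 : ℝ) < k := by exact_mod_cast (show 0 < k by omega)
  refine pos_of_mul_pos_left ?_ (sin_pi_div_pos (show 1 < k by omega)).le
  rw [S_two_mul_real_cos]
  push_cast
  apply sin_pos_of_pos_of_lt_pi (by positivity)
  rw [mul_div_assoc', div_lt_iff₀ hk, mul_comm π]
  exact mul_lt_mul_of_pos_right (by exact_mod_cast hj) pi_pos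

lemma S_eval_two_mul_cos_pi_div_sub_two_sub (hk : 2 ≤ k) (n : ℤ) :
    (S ℝ (k - 2 - n)).eval (2 * cos (π / k)) = (S ℝ n).eval (2 * cos (π / k)) := by
  refine mul_right_cancel₀ (sin_pi_div_pos (show 1 < k by omega)).ne' ?_
  rw [S_two_mul_real_cos, S_two_mul_real_cos, ← sin_pi_sub]
  push_cast
  congr 1
  field_simp
  ring

lemma S_eval_mul_add_neg_of_orbit {lam : ℝ} (m : ℕ) {t : ℕ → ℝ} (hneg : ∀ l ≤ m, t l < 0)
    (hstep : ∀ l < m, t (l + 1) = -(t l)⁻¹ - lam) :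
    (S ℝ m).eval lam * t 0 + (S ℝ (m - 1)).eval lam < 0 := by
  induction m generalizing t with
  | zero => simpa using hneg 0 le_rfl
  | succ m ih =>
    have ht₀ := hneg 0 (Nat.zero_le _)
    have key : (S ℝ (m + 1 : ℕ)).eval lam * t 0 + (S ℝ ((m + 1 : ℕ) - 1)).eval lam =
        -t 0 * ((S ℝ m).eval lam * t 1 + (S ℝ (m - 1)).eval lam) := by
      rw [hstep 0 (Nat.succ_pos m), show ((m + 1 : ℕ) : ℤ) - 1 = m by omega, Nat.cast_succ,
        S_add_one]
      simp only [Polynomial.eval_sub, Polynomial.eval_mul, Polynomial.eval_X]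
      field_simp [ht₀.ne]
      ring
    rw [key]
    exact mul_neg_of_pos_of_neg (neg_pos.mpr ht₀)
      (ih (fun l hl => hneg (l + 1) (by omega)) (fun l hl => hstep (l + 1) (by omega)))

end Polynomial.Chebyshev

lemma Real.two_mul_cos_pi_div_pos {k : ℕ} (hk : 2 < k) : 0 < 2 * cos (π / k) := by
  simpa using S_eval_two_mul_cos_pi_div_pos (j := 1) hk

namespace Rosen

noncomputable def convMat (ε a : ℕ → ℝ) (n : ℕ) : Matrix (Fin 2) (Fin 2) ℝ :=
  ((List.range n).map (fun i => !![0, ε i; 1, a i])).prod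

lemma convMat_succ (ε a : ℕ → ℝ) (n : ℕ) :
    convMat ε a (n + 1) = convMat ε a n * !![0, ε n; 1, a n] := by
  simp [convMat, List.range_succ]

lemma convMat_succ_one_zero (ε a : ℕ → ℝ) (n : ℕ) :
    convMat ε a (n + 1) 1 0 = convMat ε a n 1 1 := by
  simp [convMat_succ, Matrix.mul_apply]

lemma convMat_succ_one_one (ε a : ℕ → ℝ) (n : ℕ) :
    convMat ε a (n + 1) 1 1 = ε n * convMat ε a n 1 0 + a n * convMat ε a n 1 1 := by
  simp [convMat_succ, Matrix.mul_apply]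
  ring

/-- `u`, `v` stand for `q_{n-1}`, `q_n`, and `j` for the number of trailing digits `(-1 : λ)`. -/
def RatioBound (lam : ℝ) (j : ℕ) (u v : ℝ) : Prop :=
  0 ≤ u ∧ 0 < v ∧ (S ℝ (j + 1)).eval lam * u ≤ (S ℝ j).eval lam * v

section RatioBound

variable {lam u v : ℝ} {j : ℕ}

lemma RatioBound.step_run (h : RatioBound lam j u v) (hj₁ : 0 < (S ℝ (j + 1)).eval lam)
    (hj₂ : 0 < (S ℝ (j + 2)).eval lam) : RatioBound lam (j + 1) v (lam * v - u) := by
  obtain ⟨-, hv, huv⟩ := h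
  have key : (S ℝ (j + 2)).eval lam * v ≤ (S ℝ (j + 1)).eval lam * (lam * v - u) := by
    rw [S_eval_add_two]; linarith
  have hidx : ((j + 1 : ℕ) : ℤ) + 1 = j + 2 := by push_cast; ring
  unfold RatioBound
  rw [hidx, Nat.cast_succ]
  exact ⟨hv.le, pos_of_mul_pos_right ((mul_pos hj₂ hv).trans_le key) hj₁.le, key⟩

lemma RatioBound.step_reset (h : RatioBound lam j u v) (hlam : 0 < lam)
    (hj₁ : 0 < (S ℝ (j + 1)).eval lam) (hj₂ : 0 ≤ (S ℝ (j + 2)).eval lam) {e b : ℝ}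
    (he : e = 1 ∨ e = -1) (hb : b = lam ∨ 2 * lam ≤ b) (hrun : ¬(e = -1 ∧ b = lam)) :
    RatioBound lam 0 v (e * u + b * v) := by
  obtain ⟨hu, hv, huv⟩ := h
  have hu_le : u ≤ lam * v := by
    rw [S_eval_add_two] at hj₂
    nlinarith
  suffices lam * v ≤ e * u + b * v by
    refine ⟨hv.le, (mul_pos hlam hv).trans_le this, ?_⟩
    simpa using this
  rcases he with rfl | rfl
  · rcases hb with rfl | hb <;> nlinarith
  · rcases hb with rfl | hb
    · exact absurd ⟨rfl, rfl⟩ hrun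
    · nlinarith

end RatioBound

section Denominators

variable {lam : ℝ} {ε a : ℕ → ℝ} {L N : ℕ}

theorem exists_ratioBound_convMat (hS : ∀ j : ℕ, j ≤ L + 1 → 0 < (S ℝ j).eval lam)
    (hS' : 0 ≤ (S ℝ (L + 2 : ℕ)).eval lam) (hε : ∀ i < N, ε i = 1 ∨ ε i = -1)
    (ha : ∀ i < N, a i = lam ∨ 2 * lam ≤ a i)
    (hrun : ∀ i j, (∀ l < j, ε (i + l) = -1 ∧ a (i + l) = lam) → j ≤ L) {n : ℕ} (hn : n ≤ N) :
    ∃ j ≤ n, (∀ l < j, ε (n - j + l) = -1 ∧ a (n - j + l) = lam) ∧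
      RatioBound lam j (convMat ε a n 1 0) (convMat ε a n 1 1) := by
  induction n with
  | zero => exact ⟨0, le_rfl, by simp, by simp [RatioBound, convMat]⟩
  | succ n ih =>
    obtain ⟨j, hjn, htrail, hbd⟩ := ih (by omega)
    have hjL : j ≤ L := hrun _ _ htrail
    have hj₁ : 0 < (S ℝ (j + 1)).eval lam := by simpa using hS (j + 1) (by omega)
    rw [convMat_succ_one_zero, convMat_succ_one_one]
    by_cases hr : ε n = -1 ∧ a n = lam
    · have hext : ∀ l < j + 1, ε (n - j + l) = -1 ∧ a (n - j + l) = lam := by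
        intro l hl
        rcases Nat.lt_succ_iff_lt_or_eq.mp hl with hl | rfl
        · exact htrail l hl
        · rwa [Nat.sub_add_cancel hjn]
      have hj₂ : 0 < (S ℝ (j + 2)).eval lam := by
        simpa using hS (j + 2) (by have := hrun _ _ hext; omega)
      refine ⟨j + 1, by omega, by simpa using hext, ?_⟩
      rw [hr.1, hr.2]
      convert hbd.step_run hj₁ hj₂ using 1
      ring
    · have hlam : 0 < lam := by simpa using hS 1 (by omega)
      have hj₂ : 0 ≤ (S ℝ (j + 2)).eval lam := by
        rcases Nat.lt_or_ge j L with hj | hj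
        · simpa using (hS (j + 2) (by omega)).le
        · simpa [show j = L by omega] using hS'
      exact ⟨0, by omega, by simp,
        hbd.step_reset hlam hj₁ hj₂ (hε n (by omega)) (ha n (by omega)) hr⟩

theorem convMat_one_one_pos (hS : ∀ j : ℕ, j ≤ L + 1 → 0 < (S ℝ j).eval lam)
    (hS' : 0 ≤ (S ℝ (L + 2 : ℕ)).eval lam) (hε : ∀ i < N, ε i = 1 ∨ ε i = -1)
    (ha : ∀ i < N, a i = lam ∨ 2 * lam ≤ a i)
    (hrun : ∀ i j, (∀ l < j, ε (i + l) = -1 ∧ a (i + l) = lam) → j ≤ L) :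
    0 < convMat ε a N 1 1 := by
  obtain ⟨j, -, -, -, hpos, -⟩ := exists_ratioBound_convMat hS hS' hε ha hrun le_rfl
  exact hpos

end Denominators

end Rosen

section RosenMap

variable {lam x t : ℝ}

lemma rosenMap_eq_fract (ht : t ≠ 0) (hl : lam ≠ 0) :
    rosenMap lam t = lam * Int.fract (|t⁻¹| / lam + 1 / 2) - lam / 2 := by
  rw [rosenMap, if_neg ht, Int.fract]
  field_simp
  ring

lemma rosenMap_mem (hl : 0 < lam) (t : ℝ) :
    rosenMap lam t ∈ Set.Ico (-lam / 2) (lam / 2) := by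
  by_cases ht : t = 0
  · simp only [rosenMap, if_pos ht]
    constructor <;> linarith
  · rw [rosenMap_eq_fract ht hl.ne']
    have h₀ := Int.fract_nonneg (|t⁻¹| / lam + 1 / 2)
    have h₁ := Int.fract_lt_one (|t⁻¹| / lam + 1 / 2)
    constructor <;> nlinarith

lemma iterate_rosenMap_mem (hl : 0 < lam) (hx : x ∈ Set.Ico (-lam / 2) (lam / 2)) :
    ∀ i, (rosenMap lam)^[i] x ∈ Set.Ico (-lam / 2) (lam / 2)
  | 0 => hx
  | i + 1 => by
    rw [Function.iterate_succ_apply']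
    exact rosenMap_mem hl _

lemma two_div_le_abs_inv (ht : t ∈ Set.Ico (-lam / 2) (lam / 2)) (ht0 : t ≠ 0) :
    2 / lam ≤ |t⁻¹| := by
  have habs : |t| ≤ lam / 2 := abs_le.mpr ⟨by linarith [ht.1], ht.2.le⟩
  rw [abs_inv, ← inv_div]
  exact inv_anti₀ (abs_pos.mpr ht0) habs

lemma one_le_floor_abs_inv_div (hl : 0 < lam) (hl₂ : lam ≤ 2)
    (ht : t ∈ Set.Ico (-lam / 2) (lam / 2)) (ht0 : t ≠ 0) :
    1 ≤ ⌊|t⁻¹| / lam + 1 / 2⌋ := by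
  have : 1 / 2 ≤ |t⁻¹| / lam := by
    rw [le_div_iff₀ hl]
    calc 1 / 2 * lam ≤ 2 / lam := by rw [le_div_iff₀ hl]; nlinarith
      _ ≤ |t⁻¹| := two_div_le_abs_inv ht ht0
  exact Int.le_floor.mpr (by push_cast; linarith)

lemma rosenEps_add (lam x : ℝ) (i l : ℕ) :
    rosenEps lam x (i + l) = rosenEps lam ((rosenMap lam)^[i] x) l := by
  rw [rosenEps, rosenEps, ← Function.iterate_add_apply, Nat.add_comm i l]

lemma rosenA_add (lam x : ℝ) (i l : ℕ) :
    rosenA lam x (i + l) = rosenA lam ((rosenMap lam)^[i] x) l := by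
  rw [rosenA, rosenA, ← Function.iterate_add_apply, Nat.add_comm i l]

lemma rosenEps_eq_one_or_eq_neg_one {i : ℕ} (hi : (rosenMap lam)^[i] x ≠ 0) :
    rosenEps lam x i = 1 ∨ rosenEps lam x i = -1 :=
  (Real.sign_apply_eq_of_ne_zero _ hi).symm

lemma rosenA_eq_or_two_mul_le (hl : 0 < lam) (hl₂ : lam ≤ 2)
    (hx : x ∈ Set.Ico (-lam / 2) (lam / 2)) {i : ℕ} (hi : (rosenMap lam)^[i] x ≠ 0) :
    rosenA lam x i = lam ∨ 2 * lam ≤ rosenA lam x i := by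
  have h := one_le_floor_abs_inv_div hl hl₂ (iterate_rosenMap_mem hl hx i) hi
  rw [rosenA]
  rcases h.eq_or_lt with h | h
  · left; rw [← h]; simp
  · right
    have : (2 : ℝ) ≤ ⌊|((rosenMap lam)^[i] x)⁻¹| / lam + 1 / 2⌋ := by exact_mod_cast h
    nlinarith

lemma floor_eq_one_of_rosenA_eq (hl : 0 < lam) {i : ℕ} (ha : rosenA lam x i = lam) :
    ⌊|((rosenMap lam)^[i] x)⁻¹| / lam + 1 / 2⌋ = 1 := by
  rw [rosenA] at ha
  exact_mod_cast mul_left_eq_self₀.mp ha |>.resolve_right hl.ne'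

lemma iterate_rosenMap_succ_of_run (hl : 0 < lam) {i : ℕ} (he : rosenEps lam x i = -1)
    (ha : rosenA lam x i = lam) :
    (rosenMap lam)^[i] x < 0 ∧ (rosenMap lam)^[i + 1] x = -((rosenMap lam)^[i] x)⁻¹ - lam := by
  have hneg : (rosenMap lam)^[i] x < 0 := Real.neg_of_sign_eq_neg_one he
  refine ⟨hneg, ?_⟩
  rw [Function.iterate_succ_apply', rosenMap, if_neg hneg.ne, floor_eq_one_of_rosenA_eq hl ha,
    abs_of_neg (inv_lt_zero.mpr hneg)]
  push_cast
  ring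

lemma four_lt_three_mul_sq_of_run (hl : 0 < lam) (hx : x ∈ Set.Ico (-lam / 2) (lam / 2))
    {i : ℕ} (he : rosenEps lam x i = -1) (ha : rosenA lam x i = lam) :
    4 < 3 * lam ^ 2 := by
  set t := (rosenMap lam)^[i] x
  have hneg : t < 0 := (iterate_rosenMap_succ_of_run hl he ha).1
  have hlow := two_div_le_abs_inv (iterate_rosenMap_mem hl hx i) hneg.ne
  have hup : |t⁻¹| / lam + 1 / 2 < 2 := by
    have := Int.lt_floor_add_one (|t⁻¹| / lam + 1 / 2)
    rw [floor_eq_one_of_rosenA_eq hl ha] at this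
    push_cast at this
    linarith
  rw [div_add' _ _ _ hl.ne', div_lt_iff₀ hl] at hup
  rw [div_le_iff₀ hl] at hlow
  nlinarith

end RosenMap

/-- Along the run the orbit follows `t ↦ -1/t - λ`, which forces `λ x + λ² - 1 < 0` and hence
`λ² < 2`; a single digit `(-1 : λ)` already forces `λ² > 4/3`. -/
theorem rosen_run_length_le {k : ℕ} (hk : 3 ≤ k) {lam : ℝ} (hlam : lam = 2 * cos (π / k))
    {x : ℝ} (hx : x ∈ Set.Ico (-lam / 2) (lam / 2)) {j : ℕ}
    (hrun : ∀ l < j, rosenEps lam x l = -1 ∧ rosenA lam x l = lam) : j ≤ k - 3 := by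
  by_contra! hj
  have hl : 0 < lam := hlam ▸ two_mul_cos_pi_div_pos hk
  have horbit (l : ℕ) (hl' : l < j) :=
    iterate_rosenMap_succ_of_run hl (hrun l hl').1 (hrun l hl').2
  have hchain := S_eval_mul_add_neg_of_orbit (lam := lam) (t := fun l => (rosenMap lam)^[l] x)
    (k - 3) (fun l hl' => (horbit l (by omega)).1) (fun l hl' => (horbit l (by omega)).2)
  have hS₁ : (S ℝ (k - 3 : ℕ)).eval lam = lam := by
    rw [show ((k - 3 : ℕ) : ℤ) = k - 2 - 1 by omega, hlam,
      S_eval_two_mul_cos_pi_div_sub_two_sub (by omega)]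
    simp
  have hS₂ : (S ℝ ((k - 3 : ℕ) - 1)).eval lam = lam ^ 2 - 1 := by
    rw [show ((k - 3 : ℕ) : ℤ) - 1 = k - 2 - 2 by omega, hlam,
      S_eval_two_mul_cos_pi_div_sub_two_sub (by omega)]
    simp [S_two]
  simp only [hS₁, hS₂, Function.iterate_zero_apply] at hchain
  apply two_mul_cos_pi_div_sq_notMem_Ioo hk
  rw [← hlam]
  have hrun₀ := hrun 0 (by omega)
  exact ⟨by linarith [four_lt_three_mul_sq_of_run hl hx hrun₀.1 hrun₀.2],
    by nlinarith [mul_le_mul_of_nonneg_left hx.1 hl.le]⟩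

/-- For the Rosen continued fraction convergents of `x ∈ [-λ/2, λ/2)`, the
denominators satisfy `q_n > 0` for all `n ≥ 0`, as long as the expansion is
defined up to step `n`. -/
theorem rosen_denominators_pos (k : ℕ) (hk : 3 ≤ k) (lam : ℝ)
    (hlam : lam = 2 * Real.cos (π / k)) (x : ℝ) (hx : x ∈ Set.Ico (-lam / 2) (lam / 2))
    (n : ℕ) (hdef : ∀ i < n, (rosenMap lam)^[i] x ≠ 0) :
    0 < rosenQ lam x n := by
  have hl : 0 < lam := hlam ▸ two_mul_cos_pi_div_pos hk
  have hl₂ : lam ≤ 2 := hlam ▸ by linarith [cos_le_one (π / k)]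
  show 0 < Rosen.convMat (rosenEps lam x) (rosenA lam x) n 1 1
  refine Rosen.convMat_one_one_pos (L := k - 3) ?_ ?_
    (fun i hi => rosenEps_eq_one_or_eq_neg_one (hdef i hi))
    (fun i hi => rosenA_eq_or_two_mul_le hl hl₂ hx (hdef i hi)) ?_
  · intro j hj
    exact hlam ▸ S_eval_two_mul_cos_pi_div_pos (by omega)
  · rw [show ((k - 3 + 2 : ℕ) : ℤ) = k - 2 - (-1) by omega, hlam,
      S_eval_two_mul_cos_pi_div_sub_two_sub (by omega), S_neg_one, Polynomial.eval_zero]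
  · intro i j hrun
    refine rosen_run_length_le hk hlam (iterate_rosenMap_mem hl hx i) fun l hl' => ?_
    rw [← rosenEps_add, ← rosenA_add]
    exact hrun l hl'
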